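/- Let n > 3 and let w be a branch sequence of length n. Then the walk determined by w has ending pair (1,1) and has no index 1 ≤ i ≤ n−1 with (g_i, g_{i+1}) = (1,1) if and only if the following two conditions hold: for every 1 ≤ i < n, the number of left branches among w(1),...,w(i) is strictly less than twice the number of right branches among w(1),...,w(i); and the total number of left branches among w(1),...,w(n) is exactly twice the total number of right branches. -/
import Mathlib


/-- One step in the random Fibonacci tree; `true` means a right branch:
from the pair `(x, y)`, a right branch leads to `(y, x + y)` and a left
branch leads to `(y, |x - y|)`. -/
def fibStep (p : ℤ × ℤ) (b : Bool) : ℤ × ℤ :=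
  if b then (p.2, p.1 + p.2) else (p.2, |p.1 - p.2|)

/-- `fibPairs w i = (g_i, g_{i+1})` for the walk determined by the branch
sequence `w`, where `w j` is the `(j+1)`-st branch choice. -/
def fibPairs (w : ℕ → Bool) : ℕ → ℤ × ℤ
  | 0 => (1, 1)
  | i + 1 => fibStep (fibPairs w i) (w i)

/-- Extend a branch sequence of length `m` by dummy values. -/
def extendW {m : ℕ} (w : Fin m → Bool) : ℕ → Bool :=
  fun i => if h : i < m then w ⟨i, h⟩ else false

/-- The ending pair `(g_m, g_{m+1})` of the walk determined by a branch
sequence of length `m`. -/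
def endPair {m : ℕ} (w : Fin m → Bool) : ℤ × ℤ := fibPairs (extendW w) m

/-- `A(n)`: the number of branch sequences of length `3n` whose walk has
ending pair `(1,1)`. -/
noncomputable def A11 (n : ℕ) : ℕ :=
  Nat.card {w : Fin (3 * n) → Bool // endPair w = (1, 1)}

/-- `S(n)`: the number of branch sequences of length `3n` whose walk has ending
pair `(1,1)` and no index `1 ≤ i ≤ 3n - 1` with `(g_i, g_{i+1}) = (1,1)`. -/
noncomputable def Sprim (n : ℕ) : ℕ :=
  Nat.card {w : Fin (3 * n) → Bool //
    endPair w = (1, 1) ∧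
    ∀ i, 1 ≤ i → i ≤ 3 * n - 1 → fibPairs (extendW w) i ≠ (1, 1)}

/-- `B(n)`: the number of branch sequences of length `3n` whose walk has ending
pair `(1,1)` and satisfies `g_i ≠ 0` for all `0 ≤ i ≤ 3n + 1`. -/
noncomputable def Bnz (n : ℕ) : ℕ :=
  Nat.card {w : Fin (3 * n) → Bool //
    endPair w = (1, 1) ∧
    ∀ i, i ≤ 3 * n + 1 → (fibPairs (extendW w) i).1 ≠ 0}

/-- `m(a,b)`: `0` if `a, b` both odd, `1` if `a` odd and `b` even,
`2` if `a` even (and `b` odd). -/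
def pairOffset (a b : ℕ) : ℕ :=
  if Odd a then (if Odd b then 0 else 1) else 2

/-- `A_{(a,b)}(n)`: the number of branch sequences of length `3n + m(a,b)`
whose walk has ending pair `(a, b)`. -/
noncomputable def Aab (a b : ℕ) (n : ℕ) : ℕ :=
  Nat.card {w : Fin (3 * n + pairOffset a b) → Bool //
    endPair w = ((a : ℤ), (b : ℤ))}

/-- `SW_{(1,1)}(a,b)`: the least `m` such that some branch sequence of
length `m` has walk with ending pair `(a, b)`. -/
noncomputable def SW (a b : ℕ) : ℕ :=
  sInf {m : ℕ | ∃ w : Fin m → Bool, endPair w = ((a : ℤ), (b : ℤ))}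

/-- Number of left branches among the first `i` branches of `w`. -/
def leftCount {m : ℕ} (w : Fin m → Bool) (i : ℕ) : ℕ :=
  ((Finset.range i).filter (fun j => extendW w j = false)).card

/-- Number of right branches among the first `i` branches of `w`. -/
def rightCount {m : ℕ} (w : Fin m → Bool) (i : ℕ) : ℕ :=
  ((Finset.range i).filter (fun j => extendW w j = true)).card

/- ### the potential function -/

def phiA : ℕ → ℕ → ℕ → ℕ
  | 0, _, _ => 0
  | f+1, x, y =>
    if x < y then phiA f (y-x) x + 2
    else if y < x then phiA f y (x-y) + 1
    else 0

lemma phiA_stable (s : ℕ) : ∀ x y f g, x + y ≤ s → 1 ≤ x → 1 ≤ y →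
    x + y ≤ f → x + y ≤ g → phiA f x y = phiA g x y := by
  induction s using Nat.strong_induction_on with
  | _ s ih =>
    intro x y f g hs hx hy hf hg
    obtain ⟨f', rfl⟩ : ∃ f', f = f' + 1 := ⟨f - 1, by omega⟩
    obtain ⟨g', rfl⟩ : ∃ g', g = g' + 1 := ⟨g - 1, by omega⟩
    show (if x < y then phiA f' (y-x) x + 2
      else if y < x then phiA f' y (x-y) + 1 else 0) =
      (if x < y then phiA g' (y-x) x + 2
      else if y < x then phiA g' y (x-y) + 1 else 0)
    split_ifs with h1 h2
    · have := ih y (by omega) (y-x) x f' g' (by omega) (by omega) hx (by omega) (by omega)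
      omega
    · have := ih x (by omega) y (x-y) f' g' (by omega) hy (by omega) (by omega) (by omega)
      omega
    · rfl

def phi (x y : ℕ) : ℕ := phiA (x + y) x y

lemma phi_def_lt {x y : ℕ} (hx : 1 ≤ x) (h : x < y) :
    phi x y = phi (y - x) x + 2 := by
  obtain ⟨f, hf⟩ : ∃ f, x + y = f + 1 := ⟨x + y - 1, by omega⟩
  have h1 : phi x y = phiA (f+1) x y := by rw [phi, hf]
  rw [h1]
  show (if x < y then phiA f (y-x) x + 2
      else if y < x then phiA f y (x-y) + 1 else 0) = _
  rw [if_pos h]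
  congr 1
  exact phiA_stable (x+y) (y-x) x f ((y-x)+x) (by omega) (by omega) hx (by omega) le_rfl

lemma phi_def_gt {x y : ℕ} (hy : 1 ≤ y) (h : y < x) :
    phi x y = phi y (x - y) + 1 := by
  obtain ⟨f, hf⟩ : ∃ f, x + y = f + 1 := ⟨x + y - 1, by omega⟩
  have h1 : phi x y = phiA (f+1) x y := by rw [phi, hf]
  rw [h1]
  show (if x < y then phiA f (y-x) x + 2
      else if y < x then phiA f y (x-y) + 1 else 0) = _
  rw [if_neg (by omega), if_pos h]
  congr 1
  exact phiA_stable (x+y) y (x-y) f (y+(x-y)) (by omega) hy (by omega) (by omega) le_rfl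

lemma phi_right {x y : ℕ} (hx : 1 ≤ x) (hy : 1 ≤ y) :
    phi y (x + y) = phi x y + 2 := by
  have := phi_def_lt hy (show y < x + y by omega)
  rwa [show x + y - y = x by omega] at this

lemma phi_left_lt {x y : ℕ} (hx : 1 ≤ x) (h : x < y) :
    phi x y = phi y (y - x) + 1 := by
  have h1 := phi_def_lt hx h
  have h2 := phi_def_gt (show 1 ≤ y - x by omega) (show y - x < y by omega)
  rw [show y - (y - x) = x by omega] at h2
  omega

lemma phi_pos {x y : ℕ} (hx : 1 ≤ x) (hy : 1 ≤ y) (hcop : Nat.gcd x y = 1)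
    (hne : ¬ (x = 1 ∧ y = 1)) : 0 < phi x y := by
  rcases lt_trichotomy x y with h | h | h
  · rw [phi_def_lt hx h]; omega
  · subst h
    rw [Nat.gcd_self] at hcop
    omega
  · rw [phi_def_gt hy h]; omega

lemma phi_one_one : phi 1 1 = 0 := rfl

/- ### count lemmas -/

section main
variable {m : ℕ} (w : Fin m → Bool)

lemma leftCount_succ (i : ℕ) :
    leftCount w (i+1) = leftCount w i + if extendW w i = false then 1 else 0 := by
  unfold leftCount
  rw [Finset.range_add_one, Finset.filter_insert]
  split_ifs with h
  · rw [Finset.card_insert_of_notMem (by simp)]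
  · omega

lemma rightCount_succ (i : ℕ) :
    rightCount w (i+1) = rightCount w i + if extendW w i = true then 1 else 0 := by
  unfold rightCount
  rw [Finset.range_add_one, Finset.filter_insert]
  split_ifs with h
  · rw [Finset.card_insert_of_notMem (by simp)]
  · omega

/- ### the invariant -/

def GoodAt (i : ℕ) : Prop :=
  ∃ a b : ℕ, fibPairs (extendW w) i = ((a : ℤ), (b : ℤ)) ∧ 1 ≤ a ∧ 1 ≤ b ∧
    Nat.gcd a b = 1 ∧
    (phi a b : ℤ) = 2 * (rightCount w i : ℤ) - (leftCount w i : ℤ)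

lemma goodAt_step {i : ℕ} (h : GoodAt w i)
    (hne : fibPairs (extendW w) i ≠ (1, 1)) : GoodAt w (i+1) := by
  obtain ⟨a, b, hp, ha, hb, hcop, hphi⟩ := h
  have hab : ¬ (a = 1 ∧ b = 1) := by
    rintro ⟨rfl, rfl⟩
    exact hne (by simpa using hp)
  have hls := leftCount_succ w i
  have hrs := rightCount_succ w i
  have hstep : fibPairs (extendW w) (i+1) = fibStep ((a : ℤ), (b : ℤ)) (extendW w i) := by
    rw [fibPairs, hp]
  cases hw : extendW w i with
  | true =>
    refine ⟨b, a + b, ?_, hb, by omega, ?_, ?_⟩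
    · rw [hstep, hw]
      unfold fibStep
      norm_num
    · simpa [Nat.Coprime, Nat.coprime_add_self_right] using
        (Nat.coprime_comm.mp hcop)
    · rw [hls, hrs, hw]
      norm_num
      have h2 := phi_right ha hb
      push_cast [h2] at *
      omega
  | false =>
    have hanb : a ≠ b := by
      intro h
      subst h
      rw [Nat.gcd_self] at hcop
      omega
    rcases Nat.lt_or_ge a b with hlt | hge
    · refine ⟨b, b - a, ?_, hb, by omega, ?_, ?_⟩
      · rw [hstep, hw]
        have habs : |(a : ℤ) - (b : ℤ)| = ((b - a : ℕ) : ℤ) := by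
          rw [abs_sub_comm, abs_of_nonneg (by push_cast; omega)]
          push_cast; omega
        simp [fibStep, habs]
      · have : Nat.Coprime b (b - a) := Nat.coprime_self_sub_right (le_of_lt hlt) |>.mpr
          (Nat.coprime_comm.mp hcop)
        exact this
      · rw [hls, hrs, hw]
        norm_num
        have h2 := phi_left_lt ha hlt
        push_cast [h2] at *
        omega
    · have hgt : b < a := by omega
      refine ⟨b, a - b, ?_, hb, by omega, ?_, ?_⟩
      · rw [hstep, hw]
        have habs : |(a : ℤ) - (b : ℤ)| = ((a - b : ℕ) : ℤ) := by
          rw [abs_of_nonneg (by push_cast; omega)]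
          push_cast; omega
        simp [fibStep, habs]
      · exact Nat.coprime_sub_self_right (le_of_lt hgt) |>.mpr (Nat.coprime_comm.mp hcop)
      · rw [hls, hrs, hw]
        norm_num
        have h2 := phi_def_gt hb hgt
        push_cast [h2] at *
        omega

lemma goodAt_one (hw0 : extendW w 0 = true) : GoodAt w 1 := by
  refine ⟨1, 2, ?_, le_refl _, one_le_two, by norm_num, ?_⟩
  · show fibStep (fibPairs (extendW w) 0) (extendW w 0) = _
    rw [hw0]
    simp [fibPairs, fibStep]
  · have hl := leftCount_succ w 0
    have hr := rightCount_succ w 0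
    rw [hw0] at hl hr
    norm_num at hl hr
    have hl0 : leftCount w 0 = 0 := by simp [leftCount]
    have hr0 : rightCount w 0 = 0 := by simp [rightCount]
    have : phi 1 2 = 2 := rfl
    rw [this]
    push_cast
    omega

lemma left_start (hw0 : extendW w 0 = false) :
    fibPairs (extendW w) 3 = (1, 1) := by
  have h1 : fibPairs (extendW w) 1 = (1, 0) := by
    show fibStep (fibPairs (extendW w) 0) (extendW w 0) = _
    rw [hw0]; simp [fibPairs, fibStep]
  have h2 : fibPairs (extendW w) 2 = (0, 1) := by
    show fibStep (fibPairs (extendW w) 1) (extendW w 1) = _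
    rw [h1]
    cases extendW w 1 <;> simp [fibStep]
  show fibStep (fibPairs (extendW w) 2) (extendW w 2) = _
  rw [h2]
  cases extendW w 2 <;> simp [fibStep]

end main


/-- A walk of length `n > 3` is primitive (ends at `(1,1)` with no intermediate
`(1,1)` pair) iff at every proper initial segment the number of left branches is
strictly less than twice the number of right branches, and in total the number
of left branches is exactly twice the number of right branches. -/
theorem primitive_characterisation (n : ℕ) (hn : 3 < n) (w : Fin n → Bool) :
    (endPair w = (1, 1) ∧
        ∀ i, 1 ≤ i → i ≤ n - 1 → fibPairs (extendW w) i ≠ (1, 1)) ↔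
      ((∀ i, 1 ≤ i → i < n → leftCount w i < 2 * rightCount w i) ∧
        leftCount w n = 2 * rightCount w n) := by
  have hend : endPair w = fibPairs (extendW w) n := rfl
  constructor
  · rintro ⟨h11, hprim⟩
    have hw0 : extendW w 0 = true := by
      cases hw : extendW w 0 with
      | false => exact absurd (left_start w hw) (hprim 3 (by omega) (by omega))
      | true => rfl
    have good : ∀ i, 1 ≤ i → i ≤ n → GoodAt w i := by
      intro i
      induction i with
      | zero => omega
      | succ i ih =>
        intro _ hle
        rcases Nat.eq_zero_or_pos i with rfl | hi
        · exact goodAt_one w hw0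
        · exact goodAt_step w (ih hi (by omega)) (hprim i hi (by omega))
    constructor
    · intro i h1 h2
      obtain ⟨a, b, hp, ha, hb, hcop, hphi⟩ := good i h1 (by omega)
      have hne : ¬ (a = 1 ∧ b = 1) := by
        rintro ⟨rfl, rfl⟩
        exact hprim i h1 (by omega) (by simpa using hp)
      have := phi_pos ha hb hcop hne
      omega
    · obtain ⟨a, b, hp, ha, hb, hcop, hphi⟩ := good n (by omega) le_rfl
      rw [hend, hp] at h11
      have ha1 : a = 1 := by
        have := congrArg Prod.fst h11; simp at this; exact_mod_cast this
      have hb1 : b = 1 := by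
        have := congrArg Prod.snd h11; simp at this; exact_mod_cast this
      rw [ha1, hb1, phi_one_one] at hphi
      push_cast at hphi
      omega
  · rintro ⟨hlt, heq⟩
    have hw0 : extendW w 0 = true := by
      cases hw : extendW w 0 with
      | false =>
        have h1 := hlt 1 le_rfl (by omega)
        have hl := leftCount_succ w 0
        have hr := rightCount_succ w 0
        rw [hw] at hl hr
        norm_num at hl hr
        have hl0 : leftCount w 0 = 0 := by simp [leftCount]
        have hr0 : rightCount w 0 = 0 := by simp [rightCount]
        omega
      | true => rfl
    have key : ∀ i, 1 ≤ i → i ≤ n → GoodAt w i := by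
      intro i
      induction i with
      | zero => omega
      | succ i ih =>
        intro _ hle
        rcases Nat.eq_zero_or_pos i with rfl | hi
        · exact goodAt_one w hw0
        · have hg := ih hi (by omega)
          refine goodAt_step w hg ?_
          obtain ⟨a, b, hp, ha, hb, hcop, hphi⟩ := hg
          intro hcon
          rw [hcon] at hp
          obtain ⟨h1, h2⟩ := Prod.mk.injEq .. ▸ hp.symm
          have ha1 : a = 1 := by exact_mod_cast h1
          have hb1 : b = 1 := by exact_mod_cast h2
          rw [ha1, hb1, phi_one_one] at hphi
          have := hlt i hi (by omega)
          push_cast at hphi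
          omega
    have hne : ∀ i, 1 ≤ i → i < n → fibPairs (extendW w) i ≠ (1, 1) := by
      intro i h1 h2 hcon
      obtain ⟨a, b, hp, ha, hb, hcop, hphi⟩ := key i h1 (by omega)
      rw [hcon] at hp
      obtain ⟨e1, e2⟩ := Prod.mk.injEq .. ▸ hp.symm
      have ha1 : a = 1 := by exact_mod_cast e1
      have hb1 : b = 1 := by exact_mod_cast e2
      rw [ha1, hb1, phi_one_one] at hphi
      have := hlt i h1 h2
      push_cast at hphi
      omega
    refine ⟨?_, fun i h1 h2 => hne i h1 (by omega)⟩
    obtain ⟨a, b, hp, ha, hb, hcop, hphi⟩ := key n (by omega) le_rfl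
    have hz : phi a b = 0 := by
      push_cast at hphi
      omega
    have : a = 1 ∧ b = 1 := by
      by_contra hcon
      have := phi_pos ha hb hcop hcon
      omega
    rw [hend, hp, this.1, this.2]
    norm_num
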